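/- arXiv:2303.18071 — 5 statements merged into one kernel-verified Lean document; each statement's English description precedes it below -/
import Mathlib

section
/- For every positive integer n and positive integer h, Σ_{d² ∣ n} μ(d) Σ_{m ∣ n/d²} m^h = n^h · Π_{p ∣ n prime} (1 + 1/p^h). -/
/-!
Let `s(n) = μ(√n)` when `n` is a perfect square and `s(n) = 0` otherwise. Reindexing `d ↦ d²`
turns the left side into the Dirichlet convolution `(s * σ_h)(n)`. Both `s * σ_h` and
`n ↦ n^h ∏_{p ∣ n} (1 + p^{-h})` are multiplicative, so it suffices to compare them at prime
powers `p^k`, `k ≥ 1`. There `s(p^j)` is `1`, `-1`, `0` for `j = 0`, `j = 2` and otherwise, so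
the convolution is `σ_h(p^k) - σ_h(p^{k-2}) = p^{kh} + p^{(k-1)h} = p^{kh} (1 + p^{-h})`.
-/

open ArithmeticFunction Finset
open scoped ArithmeticFunction.Moebius ArithmeticFunction.sigma

theorem Nat.Prime.isSquare_pow_iff {p j : ℕ} (hp : p.Prime) : IsSquare (p ^ j) ↔ Even j := by
  refine ⟨fun ⟨c, hc⟩ => ?_, fun hj => hj.isSquare_pow p⟩
  obtain ⟨i, -, rfl⟩ := (Nat.dvd_prime_pow hp).1 (Dvd.intro c hc.symm)
  rw [← pow_add] at hc
  exact ⟨i, Nat.pow_right_injective hp.two_le hc⟩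

theorem Nat.Coprime.isSquare_of_isSquare_mul {m n : ℕ} (hmn : m.Coprime n)
    (h : IsSquare (m * n)) : IsSquare m := by
  obtain ⟨c, hc⟩ := h
  have hu : IsUnit (gcd m n) := by
    simpa [Nat.isUnit_iff, gcd_eq_nat_gcd, Nat.Coprime] using hmn
  obtain ⟨d, hd⟩ := exists_eq_pow_of_mul_eq_pow hu (k := 2) (by rw [hc, sq])
  exact ⟨d, by rw [hd, sq]⟩

namespace ArithmeticFunction

def sqMoebius : ArithmeticFunction ℤ :=
  ⟨fun n => if IsSquare n then μ n.sqrt else 0, by simp⟩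

theorem sqMoebius_apply_sq (a : ℕ) : sqMoebius (a ^ 2) = μ a := by
  simp [sqMoebius, Nat.sqrt_eq', IsSquare.sq]

theorem sqMoebius_apply_of_not_isSquare {n : ℕ} (hn : ¬IsSquare n) : sqMoebius n = 0 := by
  simp [sqMoebius, hn]

theorem isMultiplicative_sqMoebius : sqMoebius.IsMultiplicative := by
  rw [IsMultiplicative.iff_ne_zero]
  refine ⟨by simpa using sqMoebius_apply_sq 1, fun {m n} _ _ hmn => ?_⟩
  by_cases hm : IsSquare m
  · by_cases hn : IsSquare n
    · obtain ⟨a, rfl⟩ := (isSquare_iff_exists_sq m).mp hm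
      obtain ⟨b, rfl⟩ := (isSquare_iff_exists_sq n).mp hn
      rw [← mul_pow, sqMoebius_apply_sq, sqMoebius_apply_sq, sqMoebius_apply_sq,
        isMultiplicative_moebius.map_mul_of_coprime
          ((hmn.coprime_dvd_left (dvd_pow_self a two_ne_zero)).coprime_dvd_right
            (dvd_pow_self b two_ne_zero))]
    · rw [sqMoebius_apply_of_not_isSquare hn, mul_zero, sqMoebius_apply_of_not_isSquare
        fun h => hn (hmn.symm.isSquare_of_isSquare_mul (mul_comm m n ▸ h))]
  · rw [sqMoebius_apply_of_not_isSquare hm, zero_mul,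
      sqMoebius_apply_of_not_isSquare fun h => hm (hmn.isSquare_of_isSquare_mul h)]

theorem sqMoebius_apply_prime_pow {p : ℕ} (hp : p.Prime) (j : ℕ) :
    sqMoebius (p ^ j) = if j = 0 then 1 else if j = 2 then -1 else 0 := by
  rcases Nat.even_or_odd' j with ⟨t, rfl | rfl⟩
  · rw [pow_mul', sqMoebius_apply_sq]
    rcases eq_or_ne t 0 with rfl | ht
    · simp
    · rw [moebius_apply_prime_pow hp ht]
      simp [ht]
  · rw [sqMoebius_apply_of_not_isSquare (by rw [hp.isSquare_pow_iff]; simp)]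
    simp only [Nat.add_eq_zero_iff, one_ne_zero, and_false, if_false]
    rw [if_neg (by omega)]

theorem intCast_sqMoebius_mul_apply_prime_pow {R : Type*} [CommRing R]
    (f : ArithmeticFunction R) {p : ℕ} (hp : p.Prime) (k : ℕ) :
    ((sqMoebius : ArithmeticFunction R) * f) (p ^ k) =
      f (p ^ k) - if 2 ≤ k then f (p ^ (k - 2)) else 0 := by
  rw [mul_apply,
    Nat.sum_divisorsAntidiagonal (f := fun a b => (sqMoebius : ArithmeticFunction R) a * f b),
    Nat.sum_divisors_prime_pow hp]
  have hterm : ∀ j ∈ range (k + 1),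
      (sqMoebius : ArithmeticFunction R) (p ^ j) * f (p ^ k / p ^ j) =
        (if j = 0 then f (p ^ k) else 0) - if j = 2 then f (p ^ (k - 2)) else 0 := by
    intro j hj
    rw [intCoe_apply, sqMoebius_apply_prime_pow hp, Nat.pow_div (mem_range_succ_iff.1 hj) hp.pos]
    split_ifs <;> simp_all
  rw [sum_congr rfl hterm, sum_sub_distrib, sum_ite_eq', sum_ite_eq']
  simp

theorem intCast_sqMoebius_mul_apply {R : Type*} [CommRing R] (f : ArithmeticFunction R) (n : ℕ) :
    ((sqMoebius : ArithmeticFunction R) * f) n =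
      ∑ d ∈ n.divisors with d ^ 2 ∣ n, (μ d : R) * f (n / d ^ 2) := by
  rw [sum_congr rfl fun d _ => by rw [← sqMoebius_apply_sq, ← intCoe_apply (R := R)],
    ← sum_image (f := fun e => (sqMoebius : ArithmeticFunction R) e * f (n / e))
      fun a _ b _ => (Nat.pow_left_injective two_ne_zero).eq_iff.1,
    mul_apply,
    Nat.sum_divisorsAntidiagonal (f := fun a b => (sqMoebius : ArithmeticFunction R) a * f b)]
  symm
  refine sum_subset (fun e he => ?_) fun e he hne => ?_
  · obtain ⟨d, hd, rfl⟩ := mem_image.1 he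
    obtain ⟨hd, hdn⟩ := mem_filter.1 hd
    exact Nat.mem_divisors.2 ⟨hdn, (Nat.mem_divisors.1 hd).2⟩
  · suffices ¬IsSquare e by
      rw [intCoe_apply, sqMoebius_apply_of_not_isSquare this, Int.cast_zero, zero_mul]
    rintro ⟨d, rfl⟩
    obtain ⟨hdd, hn⟩ := Nat.mem_divisors.1 he
    refine hne (mem_image.2 ⟨d, mem_filter.2 ⟨Nat.mem_divisors.2 ⟨?_, hn⟩, ?_⟩, sq d⟩)
    · exact (dvd_mul_right d d).trans hdd
    · rwa [sq]

theorem sigma_apply_prime_pow_add_two {p : ℕ} (hp : p.Prime) (k h : ℕ) :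
    σ h (p ^ (k + 2)) = σ h (p ^ k) + p ^ ((k + 1) * h) + p ^ ((k + 2) * h) := by
  simp only [sigma_apply_prime_pow hp, sum_range_succ]

theorem intCast_sqMoebius_mul_sigma_apply_prime_pow_succ {R : Type*} [CommRing R] {p : ℕ}
    (hp : p.Prime) (j h : ℕ) :
    ((sqMoebius : ArithmeticFunction R) * (σ h : ArithmeticFunction R)) (p ^ (j + 1)) =
      (p : R) ^ (j * h) + (p : R) ^ ((j + 1) * h) := by
  rw [intCast_sqMoebius_mul_apply_prime_pow _ hp, natCoe_apply]
  rcases j with _ | k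
  · rw [if_neg (by omega), sub_zero, sigma_apply_prime_pow hp]
    simp [sum_range_succ]
  · rw [if_pos (by omega), natCoe_apply, show k + 1 + 1 = k + 2 from rfl, Nat.add_sub_cancel,
      sigma_apply_prime_pow_add_two hp]
    push_cast
    ring

theorem intCast_sqMoebius_mul_sigma {K : Type*} [Field K] [CharZero K] (h : ℕ) :
    (sqMoebius : ArithmeticFunction K) * (σ h : ArithmeticFunction K) =
      (pow h : ArithmeticFunction K).pmul (prodPrimeFactors fun p => 1 + 1 / (p : K) ^ h) := by
  have hl := (isMultiplicative_sqMoebius.intCast (R := K)).mul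
    (isMultiplicative_sigma (k := h)).natCast
  have hr := (isMultiplicative_pow (k := h)).natCast.pmul
    (IsMultiplicative.prodPrimeFactors fun p => 1 + 1 / (p : K) ^ h)
  refine (IsMultiplicative.eq_iff_eq_on_prime_powers _ hl _ hr).2 fun p i hp => ?_
  rcases i with _ | j
  · rw [pow_zero, hl.map_one, hr.map_one]
  have hp0 : (p : K) ≠ 0 := Nat.cast_ne_zero.2 hp.ne_zero
  rw [intCast_sqMoebius_mul_sigma_apply_prime_pow_succ hp, pmul_apply, natCoe_apply, pow_apply,
    prodPrimeFactors_apply (pow_ne_zero _ hp.ne_zero),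
    Nat.primeFactors_prime_pow j.succ_ne_zero hp, prod_singleton, if_neg (by simp [hp.ne_zero])]
  push_cast
  field_simp
  ring

end ArithmeticFunction

theorem stmt_4_general (n h : ℕ) (hn : 0 < n) :
    ∑ d ∈ n.divisors.filter (fun d => d ^ 2 ∣ n),
        (ArithmeticFunction.moebius d : ℝ) * ∑ m ∈ (n / d ^ 2).divisors, (m : ℝ) ^ h =
      (n : ℝ) ^ h * ∏ p ∈ n.primeFactors, (1 + 1 / (p : ℝ) ^ h) := by
  have hσ (k : ℕ) : ∑ m ∈ k.divisors, (m : ℝ) ^ h = (σ h : ArithmeticFunction ℝ) k := by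
    simp [sigma_apply]
  simp_rw [hσ]
  rw [← intCast_sqMoebius_mul_apply, intCast_sqMoebius_mul_sigma, pmul_apply, natCoe_apply,
    pow_apply, prodPrimeFactors_apply hn.ne', if_neg (by omega), Nat.cast_pow]

theorem stmt_4 (n h : ℕ) (hn : 0 < n) (hh : 0 < h) :
    ∑ d ∈ n.divisors.filter (fun d => d ^ 2 ∣ n),
        (ArithmeticFunction.moebius d : ℝ) * ∑ m ∈ (n / d ^ 2).divisors, (m : ℝ) ^ h =
      (n : ℝ) ^ h * ∏ p ∈ n.primeFactors, (1 + 1 / (p : ℝ) ^ h) :=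
  stmt_4_general n h hn
end

section
/- Let ψ be a real Dirichlet character modulo N and suppose gcd(n, N) = 1. Then for any positive integer h, Σ_{d² ∣ n} μ(d) Σ_{m ∣ n/d²} ψ(n/(m d²)) m^h = n^h Π_{p ∣ n prime} (1 + ψ(p)/p^h). -/
open ArithmeticFunction Finset

private noncomputable def Psi {N : ℕ} (ψ : DirichletCharacter ℂ N) : ArithmeticFunction ℂ :=
  ⟨fun k => if k = 0 then 0 else ψ (k : ZMod N), if_pos rfl⟩

private lemma Psi_apply {N : ℕ} (ψ : DirichletCharacter ℂ N) {k : ℕ} (hk : k ≠ 0) :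
    Psi ψ k = ψ (k : ZMod N) := if_neg hk

private lemma Psi_mult {N : ℕ} (ψ : DirichletCharacter ℂ N) : (Psi ψ).IsMultiplicative := by
  rw [ArithmeticFunction.IsMultiplicative.iff_ne_zero]
  constructor
  · rw [Psi_apply ψ one_ne_zero]; simp
  · intro m n hm hn _
    rw [Psi_apply ψ (mul_ne_zero hm hn), Psi_apply ψ hm, Psi_apply ψ hn]
    push_cast
    exact map_mul ψ _ _

private def cpow (h : ℕ) : ArithmeticFunction ℂ :=
  ⟨fun k => if k = 0 then 0 else (k : ℂ) ^ h, if_pos rfl⟩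

private lemma cpow_apply {h k : ℕ} (hk : k ≠ 0) : cpow h k = (k : ℂ) ^ h := if_neg hk

private lemma cpow_mult (h : ℕ) : (cpow h).IsMultiplicative := by
  rw [ArithmeticFunction.IsMultiplicative.iff_ne_zero]
  constructor
  · rw [cpow_apply one_ne_zero]; simp
  · intro m n hm hn _
    rw [cpow_apply (mul_ne_zero hm hn), cpow_apply hm, cpow_apply hn]
    push_cast
    ring

private def Asq : ArithmeticFunction ℂ :=
  ⟨fun k => if Nat.sqrt k * Nat.sqrt k = k then ((moebius (Nat.sqrt k) : ℤ) : ℂ) else 0,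
    by simp⟩

private lemma Asq_apply (k : ℕ) :
    Asq k = if Nat.sqrt k * Nat.sqrt k = k then ((moebius (Nat.sqrt k) : ℤ) : ℂ) else 0 := rfl

private lemma Asq_sq (d : ℕ) : Asq (d ^ 2) = ((moebius d : ℤ) : ℂ) := by
  rw [Asq_apply, Nat.sqrt_eq', if_pos (by rw [← pow_two])]

private lemma Asq_mult : Asq.IsMultiplicative := by
  constructor
  · have := Asq_sq 1
    norm_num at this
    rw [this]
  · intro m n hmn
    by_cases hm : Nat.sqrt m * Nat.sqrt m = m
    · by_cases hn : Nat.sqrt n * Nat.sqrt n = n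
      · have hab : Nat.sqrt (m * n) = Nat.sqrt m * Nat.sqrt n := by
          conv_lhs => rw [← hm, ← hn,
            show Nat.sqrt m * Nat.sqrt m * (Nat.sqrt n * Nat.sqrt n)
              = (Nat.sqrt m * Nat.sqrt n) * (Nat.sqrt m * Nat.sqrt n) by ring]
          exact Nat.sqrt_eq _
        have hcop : (Nat.sqrt m).Coprime (Nat.sqrt n) :=
          Nat.Coprime.coprime_dvd_right (Dvd.intro _ hn)
            (Nat.Coprime.coprime_dvd_left (Dvd.intro _ hm) hmn)
        rw [Asq_apply (m * n), Asq_apply m, Asq_apply n, if_pos hm, if_pos hn, hab,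
          if_pos (by rw [show Nat.sqrt m * Nat.sqrt n * (Nat.sqrt m * Nat.sqrt n)
            = Nat.sqrt m * Nat.sqrt m * (Nat.sqrt n * Nat.sqrt n) by ring, hm, hn]),
          ArithmeticFunction.isMultiplicative_moebius.map_mul_of_coprime hcop]
        push_cast; ring
      · rw [Asq_apply (m * n), Asq_apply n, if_neg hn, mul_zero]
        rw [if_neg]
        intro hsq
        obtain ⟨d, hd⟩ : ∃ d, n = d ^ 2 := by
          refine exists_eq_pow_of_mul_eq_pow (a := n) (b := m)
            (by rw [Nat.isUnit_iff]; exact hmn.symm) (c := Nat.sqrt (m * n)) ?_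
          rw [mul_comm, pow_two]
          exact hsq.symm
        apply hn
        rw [hd, Nat.sqrt_eq', ← pow_two]
    · rw [Asq_apply (m * n), Asq_apply m, if_neg hm, zero_mul]
      rw [if_neg]
      intro hsq
      obtain ⟨d, hd⟩ : ∃ d, m = d ^ 2 := by
        refine exists_eq_pow_of_mul_eq_pow (a := m) (b := n)
          (by rw [Nat.isUnit_iff]; exact hmn) (c := Nat.sqrt (m * n)) ?_
        rw [pow_two]
        exact hsq.symm
      apply hm
      rw [hd, Nat.sqrt_eq', ← pow_two]

theorem stmt_5 (N : ℕ) (ψ : DirichletCharacter ℂ N)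
    (hreal : ∀ a : ZMod N, ψ a = (starRingEnd ℂ) (ψ a))
    (n h : ℕ) (hn : 0 < n) (hh : 0 < h) (hcop : n.Coprime N) :
    ∑ d ∈ n.divisors.filter (fun d => d ^ 2 ∣ n),
        (ArithmeticFunction.moebius d : ℂ) *
          ∑ m ∈ (n / d ^ 2).divisors, ψ ((n / (m * d ^ 2) : ℕ) : ZMod N) * (m : ℂ) ^ h =
      (n : ℂ) ^ h * ∏ p ∈ n.primeFactors, (1 + ψ ((p : ℕ) : ZMod N) / (p : ℂ) ^ h) := by
  set F : ArithmeticFunction ℂ := Psi ψ * cpow h with hFdef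
  set L : ArithmeticFunction ℂ := Asq * F with hLdef
  have hLmult : L.IsMultiplicative := Asq_mult.mul ((Psi_mult ψ).mul (cpow_mult h))
  -- F on divisors
  have hF : ∀ k : ℕ, k ≠ 0 →
      F k = ∑ m ∈ k.divisors, ψ ((k / m : ℕ) : ZMod N) * (m : ℂ) ^ h := by
    intro k hk
    rw [hFdef, ArithmeticFunction.mul_apply,
      Nat.sum_divisorsAntidiagonal' (fun a b => Psi ψ a * cpow h b)]
    refine Finset.sum_congr rfl fun m hm => ?_
    obtain ⟨hmk, -⟩ := Nat.mem_divisors.mp hm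
    have hm0 : m ≠ 0 := by rintro rfl; simp at hm
    have hkm : k / m ≠ 0 := by
      have := Nat.le_of_dvd (Nat.pos_of_ne_zero hk) hmk
      exact Nat.div_ne_zero_iff.mpr ⟨hm0, this⟩
    rw [Psi_apply ψ hkm, cpow_apply hm0]
  -- L as a sum over square divisors
  have hLgen : ∀ k : ℕ, k ≠ 0 →
      L k = ∑ d ∈ k.divisors.filter (fun d => d ^ 2 ∣ k),
        ((moebius d : ℤ) : ℂ) * F (k / d ^ 2) := by
    intro k hk
    rw [hLdef, ArithmeticFunction.mul_apply,
      Nat.sum_divisorsAntidiagonal (fun a b => Asq a * F b)]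
    rw [← Finset.sum_filter_of_ne (p := fun a => Nat.sqrt a * Nat.sqrt a = a)
      (fun a _ hne => by
        by_contra hc
        exact hne (by rw [Asq_apply, if_neg hc, zero_mul]))]
    refine (Finset.sum_nbij' (fun d => d ^ 2) (fun a => Nat.sqrt a) ?_ ?_ ?_ ?_ ?_).symm
    · intro d hd
      rw [Finset.mem_filter] at hd ⊢
      rw [Nat.mem_divisors] at hd ⊢
      exact ⟨⟨hd.2, hk⟩, by rw [Nat.sqrt_eq', ← pow_two]⟩
    · intro a ha
      rw [Finset.mem_filter, Nat.mem_divisors] at ha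
      obtain ⟨⟨hak, -⟩, hsq⟩ := ha
      have hda : Nat.sqrt a ∣ a := ⟨Nat.sqrt a, hsq.symm⟩
      have h1 : Nat.sqrt a ^ 2 = a := by rw [pow_two, hsq]
      show Nat.sqrt a ∈ Finset.filter _ _
      rw [Finset.mem_filter, Nat.mem_divisors]
      exact ⟨⟨dvd_trans hda hak, hk⟩, by rw [h1]; exact hak⟩
    · intro d _; exact Nat.sqrt_eq' d
    · intro a ha
      rw [Finset.mem_filter] at ha
      show Nat.sqrt a ^ 2 = a
      rw [pow_two, ha.2]
    · intro d _
      rw [Asq_sq]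
  -- the LHS equals L n
  have hmain : ∑ d ∈ n.divisors.filter (fun d => d ^ 2 ∣ n),
      (ArithmeticFunction.moebius d : ℂ) *
        ∑ m ∈ (n / d ^ 2).divisors, ψ ((n / (m * d ^ 2) : ℕ) : ZMod N) * (m : ℂ) ^ h = L n := by
    rw [hLgen n hn.ne']
    refine Finset.sum_congr rfl fun d hd => ?_
    rw [Finset.mem_filter] at hd
    have hd2 : d ^ 2 ∣ n := hd.2
    have hnd2 : n / d ^ 2 ≠ 0 := by
      have hd0 : d ^ 2 ≠ 0 := by
        rintro h0
        rw [h0, zero_dvd_iff] at hd2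
        exact hn.ne' hd2
      exact Nat.div_ne_zero_iff.mpr ⟨hd0, Nat.le_of_dvd hn hd2⟩
    rw [hF _ hnd2]
    congr 1
    refine Finset.sum_congr rfl fun m hm => ?_
    rw [show n / (m * d ^ 2) = n / d ^ 2 / m by rw [Nat.div_div_eq_div_mul, mul_comm]]
  rw [hmain]
  -- quadraticity
  have hquad : ∀ p : ℕ, p.Prime → p ∣ n → (ψ ((p : ℕ) : ZMod N)) ^ 2 = 1 := by
    intro p hp hpn
    have hN : N ≠ 0 := by
      rintro rfl
      rw [Nat.coprime_zero_right] at hcop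
      rw [hcop, Nat.dvd_one] at hpn
      exact hp.one_lt.ne' hpn
    haveI : NeZero N := ⟨hN⟩
    have hpN : p.Coprime N := Nat.Coprime.coprime_dvd_left hpn hcop
    set u : (ZMod N)ˣ := ZMod.unitOfCoprime p hpN with hu
    have hcard : 0 < Fintype.card (ZMod N)ˣ := Fintype.card_pos
    have hpow : (ψ ((p : ℕ) : ZMod N)) ^ Fintype.card (ZMod N)ˣ = 1 := by
      rw [← map_pow]
      have : ((p : ZMod N)) ^ Fintype.card (ZMod N)ˣ = 1 := by
        rw [← ZMod.coe_unitOfCoprime p hpN, ← Units.val_pow_eq_pow_val, pow_card_eq_one,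
          Units.val_one]
      rw [this, map_one]
    set z : ℂ := ψ ((p : ℕ) : ZMod N) with hz
    have hre : (z.re : ℂ) = z := Complex.conj_eq_iff_re.mp (hreal _).symm
    have hxpow : z.re ^ Fintype.card (ZMod N)ˣ = 1 := by
      have := hpow
      rw [← hre] at this
      exact_mod_cast this
    have habs : |z.re| = 1 := by
      by_contra hne
      rcases lt_or_gt_of_ne hne with hlt | hgt
      · have := pow_lt_one₀ (abs_nonneg _) hlt hcard.ne'
        rw [← abs_pow, hxpow] at this
        simp at this
      · have := one_lt_pow₀ hgt hcard.ne'
        rw [← abs_pow, hxpow] at this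
        simp at this
    have hx2 : z.re ^ 2 = 1 := by rw [← sq_abs, habs, one_pow]
    rw [← hre]
    exact_mod_cast hx2
  -- factor both sides over primes
  rw [ArithmeticFunction.IsMultiplicative.multiplicative_factorization L hLmult hn.ne',
    Finsupp.prod, Nat.support_factorization]
  have hnpow : (n : ℂ) ^ h = ∏ p ∈ n.primeFactors, ((p : ℂ) ^ (n.factorization p)) ^ h := by
    rw [Finset.prod_pow]
    congr 1
    conv_lhs => rw [← Nat.factorization_prod_pow_eq_self hn.ne']
    rw [Finsupp.prod, Nat.support_factorization]
    push_cast
    rfl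
  rw [hnpow, ← Finset.prod_mul_distrib]
  refine Finset.prod_congr rfl fun p hp => ?_
  have hprime : p.Prime := Nat.prime_of_mem_primeFactors hp
  have hpn : p ∣ n := Nat.dvd_of_mem_primeFactors hp
  set a : ℕ := n.factorization p with ha
  have ha1 : 1 ≤ a := hprime.factorization_pos_of_dvd hn.ne' hpn
  set c : ℂ := ψ ((p : ℕ) : ZMod N) with hc
  set q : ℂ := (p : ℂ) ^ h with hq
  have hp0 : (p : ℂ) ≠ 0 := Nat.cast_ne_zero.mpr hprime.ne_zero
  have hq0 : q ≠ 0 := pow_ne_zero _ hp0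
  have hc2 : c ^ 2 = 1 := hquad p hprime hpn
  -- F at prime powers
  have hFp : ∀ b : ℕ, F (p ^ b) = ∑ j ∈ Finset.range (b + 1), c ^ (b - j) * q ^ j := by
    intro b
    rw [hFdef, ArithmeticFunction.mul_apply,
      Nat.sum_divisorsAntidiagonal' (fun x y => Psi ψ x * cpow h y),
      Nat.sum_divisors_prime_pow hprime]
    refine Finset.sum_congr rfl fun j hj => ?_
    have hjb : j ≤ b := Nat.lt_succ_iff.mp (Finset.mem_range.mp hj)
    rw [Nat.pow_div hjb hprime.pos, Psi_apply ψ (pow_ne_zero _ hprime.ne_zero),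
      cpow_apply (pow_ne_zero _ hprime.ne_zero)]
    push_cast
    rw [map_pow, ← hc, hq]
    ring
  -- L at prime powers
  have hLp : L (p ^ a) = q ^ a + c * q ^ (a - 1) := by
    rw [hLgen _ (pow_ne_zero _ hprime.ne_zero)]
    have hfilter : ∑ d ∈ (p ^ a).divisors.filter (fun d => d ^ 2 ∣ p ^ a),
        ((moebius d : ℤ) : ℂ) * F (p ^ a / d ^ 2)
        = ∑ d ∈ (if 2 ≤ a then ({1, p} : Finset ℕ) else {1}),
          ((moebius d : ℤ) : ℂ) * F (p ^ a / d ^ 2) := by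
      refine (Finset.sum_subset ?_ ?_).symm
      · intro x hx
        split_ifs at hx with h2
        · rw [Finset.mem_insert, Finset.mem_singleton] at hx
          rcases hx with hx1 | hxp
          · rw [Finset.mem_filter, Nat.mem_divisors, hx1]
            exact ⟨⟨one_dvd _, pow_ne_zero _ hprime.ne_zero⟩, by rw [one_pow]; exact one_dvd _⟩
          · rw [Finset.mem_filter, Nat.mem_divisors, hxp]
            exact ⟨⟨dvd_pow_self p (by omega), pow_ne_zero _ hprime.ne_zero⟩,
              pow_dvd_pow p h2⟩
        · rw [Finset.mem_singleton] at hx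
          subst hx
          simp [Nat.mem_divisors, pow_ne_zero _ hprime.ne_zero, one_dvd, hprime.ne_zero]
      · intro x hx hnx
        rw [Finset.mem_filter, Nat.mem_divisors] at hx
        obtain ⟨⟨hxdvd, -⟩, hx2⟩ := hx
        obtain ⟨i, hi, rfl⟩ := (Nat.dvd_prime_pow hprime).mp hxdvd
        have h2ia : i * 2 ≤ a := by
          rw [← pow_mul] at hx2
          exact (Nat.pow_dvd_pow_iff_le_right hprime.one_lt).mp hx2
        have hi2 : 2 ≤ i := by
          by_contra hlt
          push_neg at hlt
          apply hnx
          interval_cases i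
          · split_ifs <;> simp
          · rw [if_pos (by omega), pow_one]
            simp
        have hnsf : ¬ Squarefree (p ^ i) := by
          intro hsf
          have := hsf p (by
            rw [← pow_two]
            exact pow_dvd_pow p hi2)
          exact hprime.one_lt.ne' (Nat.isUnit_iff.mp this)
        rw [moebius_eq_zero_of_not_squarefree hnsf]
        simp
    rw [hfilter]
    rcases eq_or_lt_of_le ha1 with haeq | ha2
    · rw [if_neg (by omega)]
      rw [Finset.sum_singleton]
      simp only [one_pow, Nat.div_one, moebius_apply_one]
      rw [hFp]
      rw [← haeq]
      simp [Finset.sum_range_succ]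
      ring
    · have h2a : 2 ≤ a := ha2
      rw [if_pos h2a]
      rw [Finset.sum_pair (by
        intro h1p
        exact hprime.one_lt.ne h1p)]
      rw [one_pow, Nat.div_one, moebius_apply_one, moebius_apply_prime hprime,
        Nat.pow_div h2a hprime.pos, hFp, hFp]
      obtain ⟨b, hb⟩ : ∃ b, a = b + 2 := ⟨a - 2, by omega⟩
      rw [hb, Nat.add_sub_cancel, show b + 2 - 1 = b + 1 from rfl]
      have hsplit : ∑ j ∈ Finset.range (b + 2 + 1), c ^ (b + 2 - j) * q ^ j
          = (∑ j ∈ Finset.range (b + 1), c ^ (b - j) * q ^ j) + c * q ^ (b + 1) + q ^ (b + 2) := by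
        rw [Finset.sum_range_succ, Finset.sum_range_succ,
          show (∑ j ∈ Finset.range (b + 1), c ^ (b + 2 - j) * q ^ j)
              = ∑ j ∈ Finset.range (b + 1), c ^ (b - j) * q ^ j from
            Finset.sum_congr rfl fun j hj => by
              have hjb : j ≤ b := Nat.lt_succ_iff.mp (Finset.mem_range.mp hj)
              rw [show b + 2 - j = (b - j) + 2 by omega, pow_add, hc2, mul_one],
          show b + 2 - (b + 1) = 1 by omega, show b + 2 - (b + 2) = 0 by omega]
        ring
      rw [hsplit]
      push_cast
      ring
  rw [hLp]
  have hqa : ((p : ℂ) ^ a) ^ h = q ^ a := by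
    rw [hq, ← pow_mul, ← pow_mul, mul_comm]
  rw [hqa]
  have : q ^ a = q ^ (a - 1) * q := by
    rw [← pow_succ]
    congr 1
    omega
  rw [this]
  field_simp
end

section
/- For every positive integer n, Σ_{d² ∣ n} μ(d) σ(n/d²) = n · Π_{p ∣ n prime} (1 + 1/p), where σ is the sum-of-divisors function. -/
/-!
The sum is the Dirichlet convolution `(μ.onSquares * σ 1) n`, where `μ.onSquares` sends a perfect
square `d ^ 2` to `μ d` and every other number to `0`. Both this convolution and
`n ↦ n ∏_{p ∣ n} (1 + 1 / p)` are multiplicative, so it suffices to compare them at prime powers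
`p ^ k`, `k ≥ 1`. There only `d = 1` and, when `k ≥ 2`, `d = p` contribute, giving
`σ₁(p ^ k) - σ₁(p ^ (k - 2)) = p ^ k + p ^ (k - 1) = p ^ k (1 + 1 / p)` (and `σ₁(p) = p + 1`).
-/

open Finset
open scoped ArithmeticFunction.Moebius ArithmeticFunction.sigma

namespace ArithmeticFunction

variable {R : Type*}

def onSquares [Zero R] (f : ArithmeticFunction R) : ArithmeticFunction R :=
  ⟨fun n => if IsSquare n then f n.sqrt else 0, by simp⟩

section Zero

variable [Zero R] (f : ArithmeticFunction R)

theorem onSquares_apply (n : ℕ) : f.onSquares n = if IsSquare n then f n.sqrt else 0 := rfl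

@[simp]
theorem onSquares_apply_sq (d : ℕ) : f.onSquares (d ^ 2) = f d := by
  rw [onSquares_apply, if_pos ⟨d, sq d⟩, Nat.sqrt_eq']

theorem onSquares_apply_of_not_isSquare {n : ℕ} (hn : ¬IsSquare n) : f.onSquares n = 0 :=
  if_neg hn

end Zero

theorem IsMultiplicative.onSquares [MonoidWithZero R] {f : ArithmeticFunction R}
    (hf : f.IsMultiplicative) : f.onSquares.IsMultiplicative := by
  refine ⟨by simpa [hf.map_one] using f.onSquares_apply_sq 1, fun {m n} hmn => ?_⟩
  by_cases hsq : IsSquare (m * n)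
  · obtain ⟨c, hc⟩ := hsq
    have hc : m * n = c ^ 2 := by rw [hc, sq]
    obtain ⟨a, rfl⟩ := exists_eq_pow_of_mul_eq_pow (Nat.isUnit_iff.mpr hmn) hc
    obtain ⟨b, rfl⟩ := exists_eq_pow_of_mul_eq_pow (Nat.isUnit_iff.mpr hmn.symm)
      (by rw [mul_comm, hc])
    have hab : a.Coprime b :=
      (Nat.coprime_pow_left_iff two_pos _ _).mp ((Nat.coprime_pow_right_iff two_pos _ _).mp hmn)
    rw [← mul_pow, onSquares_apply_sq, onSquares_apply_sq, onSquares_apply_sq,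
      hf.map_mul_of_coprime hab]
  · by_cases hm : IsSquare m
    · have hn : ¬IsSquare n := fun hn => hsq (hm.mul hn)
      rw [onSquares_apply_of_not_isSquare _ hsq, onSquares_apply_of_not_isSquare _ hn, mul_zero]
    · rw [onSquares_apply_of_not_isSquare _ hsq, onSquares_apply_of_not_isSquare _ hm, zero_mul]

theorem onSquares_mul_apply [Semiring R] (f g : ArithmeticFunction R) (n : ℕ) :
    (f.onSquares * g) n = ∑ d ∈ n.divisors with d ^ 2 ∣ n, f d * g (n / d ^ 2) := by
  have hsq_inj : Set.InjOn (fun d : ℕ => d ^ 2) ↑(n.divisors.filter fun d => d ^ 2 ∣ n) :=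
    fun a _ b _ h => Nat.pow_left_injective two_ne_zero h
  rw [mul_apply, Nat.sum_divisorsAntidiagonal (fun a b => f.onSquares a * g b)]
  symm
  calc ∑ d ∈ n.divisors with d ^ 2 ∣ n, f d * g (n / d ^ 2)
      = ∑ d ∈ n.divisors with d ^ 2 ∣ n, f.onSquares (d ^ 2) * g (n / d ^ 2) := by
        simp only [onSquares_apply_sq]
    _ = ∑ a ∈ (n.divisors.filter fun d => d ^ 2 ∣ n).image (· ^ 2), f.onSquares a * g (n / a) :=
        (sum_image (f := fun a => f.onSquares a * g (n / a)) hsq_inj).symm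
    _ = ∑ a ∈ n.divisors, f.onSquares a * g (n / a) := by
        refine sum_subset (fun a ha => ?_) fun a ha hnot => ?_
        · obtain ⟨d, hd, rfl⟩ := mem_image.mp ha
          simp only [mem_filter, Nat.mem_divisors] at hd ⊢
          exact ⟨hd.2, hd.1.2⟩
        · rw [onSquares_apply_of_not_isSquare, zero_mul]
          rintro ⟨d, rfl⟩
          refine hnot (mem_image.mpr ⟨d, ?_, sq d⟩)
          simp only [mem_filter, Nat.mem_divisors] at ha ⊢
          exact ⟨⟨(Dvd.intro d rfl).trans ha.1, ha.2⟩, by simpa [sq] using ha.1⟩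

theorem moebius_onSquares_mul_sigma_one_apply_prime_pow [CommRing R] {p k : ℕ} (hp : p.Prime)
    (hk : k ≠ 0) :
    ((μ : ArithmeticFunction R).onSquares * (σ 1 : ArithmeticFunction R)) (p ^ k) =
      p ^ k + p ^ (k - 1) := by
  rw [onSquares_mul_apply]
  simp only [intCoe_apply, natCoe_apply]
  have h_vanish : ∀ c ∈ (p ^ k).divisors, c ≠ 1 → c ≠ p → μ c = 0 := by
    intro c hc hc1 hcp
    obtain ⟨i, -, rfl⟩ := (Nat.dvd_prime_pow hp).mp (Nat.dvd_of_mem_divisors hc)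
    have hi0 : i ≠ 0 := by rintro rfl; exact hc1 (pow_zero p)
    have hi1 : i ≠ 1 := by rintro rfl; exact hcp (pow_one p)
    rw [moebius_apply_prime_pow hp hi0, if_neg hi1]
  have h_sigma (j : ℕ) : ((σ 1 (p ^ j) : ℕ) : R) = ∑ i ∈ range (j + 1), (p : R) ^ i := by
    simp [sigma_one_apply_prime_pow hp]
  obtain rfl | ⟨m, rfl⟩ : k = 1 ∨ ∃ m, k = m + 2 :=
    (Nat.lt_or_ge k 2).imp (by omega) fun h => ⟨k - 2, by omega⟩
  · rw [sum_eq_single 1]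
    · simpa [sum_range_succ, add_comm] using h_sigma 1
    · intro d hd hd1
      obtain ⟨hd, hd_sq⟩ := mem_filter.mp hd
      obtain rfl | hdp := eq_or_ne d p
      · exact absurd ((Nat.pow_dvd_pow_iff_le_right hp.one_lt).mp hd_sq) (by norm_num)
      · rw [h_vanish d hd hd1 hdp, Int.cast_zero, zero_mul]
    · simp [hp.ne_zero]
  · rw [sum_eq_add_of_mem 1 p (by simp [hp.ne_zero]) (by simp [hp.ne_zero, pow_dvd_pow])
      hp.one_lt.ne fun c hc hne => by rw [h_vanish c (mem_filter.mp hc).1 hne.1 hne.2, Int.cast_zero, zero_mul]]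
    rw [one_pow, Nat.div_one, Nat.pow_div (by omega) hp.pos, Nat.add_sub_cancel,
      show m + 2 - 1 = m + 1 by omega, moebius_apply_one,
      moebius_apply_prime hp, h_sigma, h_sigma]
    simp only [sum_range_succ, Int.cast_one, Int.cast_neg]
    ring

theorem moebius_onSquares_mul_sigma_one [Field R] [CharZero R] :
    (μ : ArithmeticFunction R).onSquares * (σ 1 : ArithmeticFunction R) =
      (ArithmeticFunction.id : ArithmeticFunction R).pmul
        (prodPrimeFactors fun p => 1 + 1 / (p : R)) := by
  have hf := (isMultiplicative_moebius.intCast (R := R)).onSquares.mul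
    (isMultiplicative_sigma (k := 1)).natCast
  have hg := isMultiplicative_id.natCast.pmul (.prodPrimeFactors fun p => 1 + 1 / (p : R))
  refine (hf.eq_iff_eq_on_prime_powers _ _ hg).mpr fun p k hp => ?_
  rcases k with _ | j
  · rw [pow_zero, hf.map_one, hg.map_one]
  have hp0 : (p : R) ≠ 0 := Nat.cast_ne_zero.mpr hp.ne_zero
  rw [moebius_onSquares_mul_sigma_one_apply_prime_pow hp j.succ_ne_zero, pmul_apply, natCoe_apply,
    id_apply, prodPrimeFactors_apply (pow_ne_zero _ hp.ne_zero),
    Nat.primeFactors_prime_pow j.succ_ne_zero hp, prod_singleton]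
  field_simp
  push_cast [Nat.succ_eq_add_one, Nat.add_sub_cancel]
  ring

end ArithmeticFunction

open ArithmeticFunction

theorem stmt_9_general (n : ℕ) :
    ∑ d ∈ n.divisors.filter (fun d => d ^ 2 ∣ n),
        (ArithmeticFunction.moebius d : ℝ) * (ArithmeticFunction.sigma 1 (n / d ^ 2) : ℝ) =
      (n : ℝ) * ∏ p ∈ n.primeFactors, (1 + 1 / (p : ℝ)) := by
  obtain rfl | hn := eq_or_ne n 0
  · simp
  have := congr($(moebius_onSquares_mul_sigma_one (R := ℝ)) n)
  rw [onSquares_mul_apply, pmul_apply, natCoe_apply, id_apply, prodPrimeFactors_apply hn] at this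
  simpa only [intCoe_apply, natCoe_apply] using this

theorem stmt_9 (n : ℕ) (hn : 0 < n) :
    ∑ d ∈ n.divisors.filter (fun d => d ^ 2 ∣ n),
        (ArithmeticFunction.moebius d : ℝ) * (ArithmeticFunction.sigma 1 (n / d ^ 2) : ℝ) =
      (n : ℝ) * ∏ p ∈ n.primeFactors, (1 + 1 / (p : ℝ)) :=
  stmt_9_general n
end

section
/- Let χ₋₄ be the nontrivial Dirichlet character modulo 4 and let α = ord₂(n) be the 2-adic valuation of n. For every positive integer n, Σ_{d² ∣ n} μ(d) Σ_{m ∣ n/d²} χ₋₄(m) m² = (1 − [4∣n]) · χ₋₄(n/2^α) · (n/2^α)² · Π_{p ∣ n prime} (1 + χ₋₄(p)/p²). -/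
/-
The left side is `(sqDilate μ * (h * ζ)) n`, where `h m = χ₋₄(m) m²` is completely
multiplicative and `sqDilate μ` is the Möbius function spread onto the squares; so it is
multiplicative in `n`. At a prime power the two nonzero values `sqDilate μ 1 = 1` and
`sqDilate μ (p²) = -1` telescope the geometric sum `∑_{j ≤ e+1} c ^ j`, `c = h p`, down to
`c ^ e * (c + 1)`. For `p = 2` we have `c = 0`, which gives the factor `1 - [4 ∣ n]`; for odd `p`
we have `χ₋₄(p)² = 1`, so `c + 1 = c * (1 + χ₋₄(p) / p²)`. Multiplying over the coprime
factors `2 ^ α` and `n / 2 ^ α` gives the formula.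
-/

/-- The nontrivial Dirichlet character modulo 4, as a function on ℕ. -/
def chiFour (m : ℕ) : ℤ :=
  if m % 4 = 1 then 1 else if m % 4 = 3 then -1 else 0

open ArithmeticFunction Finset
open scoped ArithmeticFunction.zeta ArithmeticFunction.Moebius

theorem Nat.Coprime.exists_sq_of_isSquare_mul {m n : ℕ} (hmn : m.Coprime n)
    (h : IsSquare (m * n)) : ∃ a b : ℕ, m = a ^ 2 ∧ n = b ^ 2 := by
  obtain ⟨r, hr⟩ := h
  rw [← sq] at hr
  obtain ⟨a, ha⟩ := exists_eq_pow_of_mul_eq_pow (Nat.isUnit_iff.2 hmn) hr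
  obtain ⟨b, hb⟩ :=
    exists_eq_pow_of_mul_eq_pow (Nat.isUnit_iff.2 hmn.symm) ((mul_comm n m).trans hr)
  exact ⟨a, b, ha, hb⟩

theorem Nat.primeFactors_ordCompl (n p : ℕ) :
    (ordCompl[p] n).primeFactors = n.primeFactors.erase p := by
  rw [← Nat.support_factorization, Nat.factorization_ordCompl, Finsupp.support_erase,
    Nat.support_factorization]

namespace ArithmeticFunction

variable {R : Type*}

section sqDilate

variable [MonoidWithZero R]

/-- `d ^ 2 ↦ f d`, zero off the squares: the Dirichlet series of `f` evaluated at `2 s`. -/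
def sqDilate (f : ArithmeticFunction R) : ArithmeticFunction R :=
  ⟨fun n => if n.sqrt ^ 2 = n then f n.sqrt else 0, by simp⟩

theorem sqDilate_apply_sq (f : ArithmeticFunction R) (d : ℕ) : sqDilate f (d ^ 2) = f d := by
  simp [sqDilate, Nat.sqrt_eq']

theorem sqDilate_apply_of_not_isSquare (f : ArithmeticFunction R) {n : ℕ} (hn : ¬IsSquare n) :
    sqDilate f n = 0 := by
  have : n.sqrt ^ 2 ≠ n := fun h => hn ⟨n.sqrt, by rw [← sq, h]⟩
  simp [sqDilate, this]

theorem sqDilate_apply_prime_pow (f : ArithmeticFunction R) {p : ℕ} (hp : p.Prime) (i : ℕ) :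
    sqDilate f (p ^ i) = if Even i then f (p ^ (i / 2)) else 0 := by
  split_ifs with hi
  · obtain ⟨j, rfl⟩ := hi
    rw [← two_mul, pow_mul', sqDilate_apply_sq, Nat.mul_div_cancel_left j two_pos]
  · refine sqDilate_apply_of_not_isSquare f fun ⟨s, hs⟩ => hi ⟨s.factorization p, ?_⟩
    have hs0 : s ≠ 0 := by rintro rfl; simp [hp.ne_zero] at hs
    simpa [hp.factorization_self, Nat.factorization_mul hs0 hs0] using
      congrArg (·.factorization p) hs

theorem IsMultiplicative.sqDilate {f : ArithmeticFunction R} (hf : f.IsMultiplicative) :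
    (sqDilate f).IsMultiplicative := by
  refine ⟨by simpa [hf.map_one] using sqDilate_apply_sq f 1, fun {m n} hmn => ?_⟩
  by_cases hsq : IsSquare (m * n)
  · obtain ⟨a, b, rfl, rfl⟩ := hmn.exists_sq_of_isSquare_mul hsq
    have hab : a.Coprime b :=
      (Nat.coprime_pow_left_iff two_pos _ _).1 ((Nat.coprime_pow_right_iff two_pos _ _).1 hmn)
    rw [← mul_pow, sqDilate_apply_sq, sqDilate_apply_sq, sqDilate_apply_sq,
      hf.map_mul_of_coprime hab]
  · have : ¬IsSquare m ∨ ¬IsSquare n := by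
      contrapose! hsq
      exact hsq.1.mul hsq.2
    rcases this with h | h <;> simp [sqDilate_apply_of_not_isSquare, h, hsq]

end sqDilate

theorem sqDilate_mul_apply [Semiring R] (f g : ArithmeticFunction R) (n : ℕ) :
    (sqDilate f * g) n = ∑ d ∈ n.divisors.filter (· ^ 2 ∣ n), f d * g (n / d ^ 2) := by
  rcases eq_or_ne n 0 with rfl | hn
  · simp
  have hsub : (n.divisors.filter (· ^ 2 ∣ n)).image (· ^ 2) ⊆ n.divisors := by
    simp only [subset_iff, mem_image, mem_filter, Nat.mem_divisors]
    rintro _ ⟨d, ⟨-, hd⟩, rfl⟩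
    exact ⟨hd, hn⟩
  have hzero : ∀ k ∈ n.divisors, k ∉ (n.divisors.filter (· ^ 2 ∣ n)).image (· ^ 2) →
      sqDilate f k * g (n / k) = 0 := by
    intro k hk hk'
    rw [sqDilate_apply_of_not_isSquare, zero_mul]
    rintro ⟨d, rfl⟩
    refine hk' (mem_image.2 ⟨d, mem_filter.2 ⟨?_, ?_⟩, sq d⟩)
    · exact Nat.mem_divisors.2 ⟨(dvd_mul_right d d).trans (Nat.dvd_of_mem_divisors hk), hn⟩
    · rw [sq]; exact Nat.dvd_of_mem_divisors hk
  rw [mul_apply, Nat.sum_divisorsAntidiagonal (fun a b => sqDilate f a * g b),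
    ← sum_subset hsub hzero, sum_image fun a _ b _ h => Nat.pow_left_injective two_ne_zero h]
  simp only [sqDilate_apply_sq]

theorem sqDilate_moebius_apply_prime_pow [Ring R] {p : ℕ} (hp : p.Prime) (i : ℕ) :
    sqDilate (μ : ArithmeticFunction R) (p ^ i) =
      (if i = 0 then 1 else 0) - (if i = 2 then 1 else 0) := by
  rw [sqDilate_apply_prime_pow _ hp, intCoe_apply]
  rcases Nat.even_or_odd' i with ⟨j, rfl | rfl⟩
  · rcases j with _ | _ | j
    · simp
    · simp [moebius_apply_prime hp]
    · simp [moebius_apply_prime_pow hp, show 2 * (j + 2) ≠ 2 by omega]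
  · simp [show 2 * j + 1 ≠ 2 by omega]

theorem sqDilate_moebius_mul_apply_prime_pow [Ring R] (g : ArithmeticFunction R) {p : ℕ}
    (hp : p.Prime) (e : ℕ) :
    (sqDilate (μ : ArithmeticFunction R) * g) (p ^ e) =
      g (p ^ e) - if 2 ≤ e then g (p ^ (e - 2)) else 0 := by
  have hterm : ∀ i ∈ range (e + 1),
      sqDilate (μ : ArithmeticFunction R) (p ^ i) * g (p ^ e / p ^ i) =
        (if i = 0 then g (p ^ (e - i)) else 0) - (if i = 2 then g (p ^ (e - i)) else 0) := by
    intro i hi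
    rw [Nat.pow_div (by simpa [Nat.lt_succ_iff] using hi) hp.pos,
      sqDilate_moebius_apply_prime_pow hp, sub_mul]
    simp only [ite_mul, one_mul, zero_mul]
  rw [mul_apply, Nat.sum_divisorsAntidiagonal (fun a b => sqDilate _ a * g b),
    Nat.sum_divisors_prime_pow hp, sum_congr rfl hterm, sum_sub_distrib, sum_ite_eq',
    sum_ite_eq']
  simp

theorem mul_zeta_apply_prime_pow [Semiring R] (h : ArithmeticFunction R) {p : ℕ}
    (hp : p.Prime) (hh : ∀ j, h (p ^ j) = h p ^ j) (e : ℕ) :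
    (h * ζ) (p ^ e) = ∑ j ∈ range (e + 1), h p ^ j := by
  rw [coe_mul_zeta_apply, Nat.sum_divisors_prime_pow hp]
  simp only [hh]

theorem sqDilate_moebius_mul_mul_zeta_apply_prime_pow [CommRing R] (h : ArithmeticFunction R)
    {p : ℕ} (hp : p.Prime) (hh : ∀ j, h (p ^ j) = h p ^ j) (e : ℕ) :
    (sqDilate (μ : ArithmeticFunction R) * (h * ζ)) (p ^ (e + 1)) = h p ^ e * (h p + 1) := by
  rw [sqDilate_moebius_mul_apply_prime_pow _ hp, mul_zeta_apply_prime_pow h hp hh]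
  rcases e with _ | e
  · simp [sum_range_succ, add_comm]
  · rw [if_pos (by omega), show e + 1 + 1 - 2 = e by omega, mul_zeta_apply_prime_pow h hp hh,
      sum_range_succ, sum_range_succ]
    ring

theorem IsMultiplicative.apply_eq_mul_prod_primeFactors [CommMonoidWithZero R]
    {f g : ArithmeticFunction R} (hf : f.IsMultiplicative) (hg : g.IsMultiplicative)
    (w : ℕ → R) {n : ℕ} (hn : n ≠ 0)
    (h : ∀ p ∈ n.primeFactors, f (p ^ n.factorization p) = g (p ^ n.factorization p) * w p) :
    f n = g n * ∏ p ∈ n.primeFactors, w p := by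
  rw [hf.multiplicative_factorization f hn, hg.multiplicative_factorization g hn, Finsupp.prod,
    Finsupp.prod, Nat.support_factorization, ← prod_mul_distrib]
  exact prod_congr rfl h

end ArithmeticFunction


lemma chiFour_eq_χ₄ (m : ℕ) : chiFour m = ZMod.χ₄ m := by
  rw [ZMod.χ₄_nat_eq_if_mod_four, chiFour]
  split_ifs <;> omega

lemma chiFour_mul (a b : ℕ) : chiFour (a * b) = chiFour a * chiFour b := by
  simp only [chiFour_eq_χ₄, Nat.cast_mul, map_mul]

lemma chiFour_two : chiFour 2 = 0 := rfl

lemma chiFour_sq_of_odd {p : ℕ} (hp : Odd p) : chiFour p ^ 2 = 1 := by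
  have : p % 4 = 1 ∨ p % 4 = 3 := by rcases hp with ⟨k, rfl⟩; omega
  rcases this with h | h <;> simp [chiFour, h]

noncomputable def chiFourSq : ArithmeticFunction ℝ :=
  ⟨fun m => (chiFour m : ℝ) * (m : ℝ) ^ 2, by simp⟩

lemma chiFourSq_apply (m : ℕ) : chiFourSq m = (chiFour m : ℝ) * (m : ℝ) ^ 2 := rfl

lemma chiFourSq_mul (a b : ℕ) : chiFourSq (a * b) = chiFourSq a * chiFourSq b := by
  simp only [chiFourSq_apply, chiFour_mul]
  push_cast
  ring

lemma chiFourSq_one : chiFourSq 1 = 1 := by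
  simp [chiFourSq_apply, chiFour]

lemma chiFourSq_pow (a j : ℕ) : chiFourSq (a ^ j) = chiFourSq a ^ j := by
  induction j with
  | zero => rw [pow_zero, pow_zero, chiFourSq_one]
  | succ j ih => rw [pow_succ, chiFourSq_mul, ih, pow_succ]

lemma isMultiplicative_chiFourSq : chiFourSq.IsMultiplicative :=
  ⟨chiFourSq_one, fun _ => chiFourSq_mul _ _⟩

lemma isMultiplicative_sqDilate_moebius_mul_chiFourSq_mul_zeta :
    (sqDilate (μ : ArithmeticFunction ℝ) * (chiFourSq * ζ)).IsMultiplicative :=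
  isMultiplicative_moebius.intCast.sqDilate.mul
    (isMultiplicative_chiFourSq.mul isMultiplicative_zeta.natCast)

lemma sqDilate_moebius_mul_chiFourSq_mul_zeta_apply_two_pow (e : ℕ) :
    (sqDilate (μ : ArithmeticFunction ℝ) * (chiFourSq * ζ)) (2 ^ e) =
      if e ≤ 1 then 1 else 0 := by
  rcases e with _ | e
  · simpa using isMultiplicative_sqDilate_moebius_mul_chiFourSq_mul_zeta.map_one
  · rw [sqDilate_moebius_mul_mul_zeta_apply_prime_pow _ Nat.prime_two (chiFourSq_pow 2),
      chiFourSq_apply, chiFour_two]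
    simp [zero_pow_eq]

lemma chiFourSq_add_one_of_odd {p : ℕ} (hp : Odd p) :
    chiFourSq p + 1 = chiFourSq p * (1 + (chiFour p : ℝ) / (p : ℝ) ^ 2) := by
  have hp0 : (p : ℝ) ≠ 0 := Nat.cast_ne_zero.2 hp.pos.ne'
  have hχ : (chiFour p : ℝ) ^ 2 = 1 := mod_cast chiFour_sq_of_odd hp
  rw [chiFourSq_apply]
  field_simp
  linear_combination -hχ

lemma sqDilate_moebius_mul_chiFourSq_mul_zeta_apply_of_odd {n : ℕ} (hn : Odd n) :
    (sqDilate (μ : ArithmeticFunction ℝ) * (chiFourSq * ζ)) n =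
      chiFourSq n * ∏ p ∈ n.primeFactors, (1 + (chiFour p : ℝ) / (p : ℝ) ^ 2) := by
  refine isMultiplicative_sqDilate_moebius_mul_chiFourSq_mul_zeta.apply_eq_mul_prod_primeFactors
    isMultiplicative_chiFourSq _ hn.pos.ne' fun p hp => ?_
  obtain ⟨hpp, hpn, hn0⟩ := Nat.mem_primeFactors.1 hp
  obtain ⟨e, he⟩ := Nat.exists_eq_add_one_of_ne_zero (hpp.factorization_pos_of_dvd hn0 hpn).ne'
  rw [he, sqDilate_moebius_mul_mul_zeta_apply_prime_pow _ hpp (chiFourSq_pow p), chiFourSq_pow,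
    chiFourSq_add_one_of_odd (hn.of_dvd_nat hpn), ← mul_assoc, ← pow_succ]

theorem stmt_11_general (n : ℕ) :
    ∑ d ∈ n.divisors.filter (fun d => d ^ 2 ∣ n),
        (ArithmeticFunction.moebius d : ℝ) *
          ∑ m ∈ (n / d ^ 2).divisors, (chiFour m : ℝ) * (m : ℝ) ^ 2 =
      (1 - (if 4 ∣ n then 1 else 0)) *
        (chiFour (n / 2 ^ n.factorization 2) : ℝ) *
        ((n / 2 ^ n.factorization 2 : ℕ) : ℝ) ^ 2 *
        ∏ p ∈ n.primeFactors, (1 + (chiFour p : ℝ) / (p : ℝ) ^ 2) := by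
  rcases eq_or_ne n 0 with rfl | hn0
  · simp
  have hsum : ∑ d ∈ n.divisors.filter (fun d => d ^ 2 ∣ n), (μ d : ℝ) *
      ∑ m ∈ (n / d ^ 2).divisors, (chiFour m : ℝ) * (m : ℝ) ^ 2 =
      (sqDilate (μ : ArithmeticFunction ℝ) * (chiFourSq * ζ)) n := by
    simp only [sqDilate_mul_apply, intCoe_apply, coe_mul_zeta_apply, chiFourSq_apply]
  have hsplit := Nat.ordProj_mul_ordCompl_eq_self n 2
  have hcop : (2 ^ n.factorization 2).Coprime (ordCompl[2] n) :=
    (Nat.coprime_ordCompl Nat.prime_two hn0).pow_left _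
  have hodd : Odd (ordCompl[2] n) :=
    Nat.odd_iff.2 (Nat.two_dvd_ne_zero.1 (Nat.not_dvd_ordCompl Nat.prime_two hn0))
  have h4 : (if n.factorization 2 ≤ 1 then (1 : ℝ) else 0) = 1 - if 4 ∣ n then 1 else 0 := by
    have := Nat.prime_two.pow_dvd_iff_le_factorization (k := 2) hn0
    split_ifs <;> norm_num at * <;> omega
  have hprod : ∏ p ∈ n.primeFactors, (1 + (chiFour p : ℝ) / (p : ℝ) ^ 2) =
      ∏ p ∈ (ordCompl[2] n).primeFactors, (1 + (chiFour p : ℝ) / (p : ℝ) ^ 2) := by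
    rw [Nat.primeFactors_ordCompl, prod_erase]
    simp [chiFour_two]
  rw [hsum, ← hsplit,
    isMultiplicative_sqDilate_moebius_mul_chiFourSq_mul_zeta.map_mul_of_coprime hcop, hsplit,
    sqDilate_moebius_mul_chiFourSq_mul_zeta_apply_two_pow,
    sqDilate_moebius_mul_chiFourSq_mul_zeta_apply_of_odd hodd, hprod, chiFourSq_apply, h4]
  ring

theorem stmt_11 (n : ℕ) (hn : 0 < n) :
    ∑ d ∈ n.divisors.filter (fun d => d ^ 2 ∣ n),
        (ArithmeticFunction.moebius d : ℝ) *
          ∑ m ∈ (n / d ^ 2).divisors, (chiFour m : ℝ) * (m : ℝ) ^ 2 =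
      (1 - (if 4 ∣ n then 1 else 0)) *
        (chiFour (n / 2 ^ n.factorization 2) : ℝ) *
        ((n / 2 ^ n.factorization 2 : ℕ) : ℝ) ^ 2 *
        ∏ p ∈ n.primeFactors, (1 + (chiFour p : ℝ) / (p : ℝ) ^ 2) :=
  stmt_11_general n
end

section
/- For all positive integers n, Σ_{d² ∣ n} μ(d) · σ₃(n/d²) = n³ · Π_{p ∣ n prime} (1 + 1/p³), where σ₃(m) = Σ_{t ∣ m} t³. -/
/-!
Expanding `σ₃` and exchanging the two sums over the pairs `(d, t)` with `d² t ∣ n`, the inner sum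
becomes `∑_{d² ∣ n / t} μ(d)`, which is `1` if `n / t` is squarefree and `0` otherwise: writing
`m = b² a` with `a` squarefree, `d² ∣ m` holds exactly when `d ∣ b`, so the sum is `∑_{d ∣ b} μ(d)`.
Hence the left side is `∑_{d ∣ n squarefree} (n / d)³ = n³ ∑_{d ∣ n squarefree} d⁻³`, and the last
sum is the expansion of the Euler product `∏_{p ∣ n} (1 + p⁻³)`.
-/

open Finset ArithmeticFunction
open scoped ArithmeticFunction.Moebius ArithmeticFunction.sigma ArithmeticFunction.zeta

namespace Nat

theorem dvd_of_sq_dvd_sq_mul_squarefree {a b d : ℕ} (ha : Squarefree a) (hb : b ≠ 0)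
    (h : d ^ 2 ∣ b ^ 2 * a) : d ∣ b := by
  have hba : b ^ 2 * a ≠ 0 := mul_ne_zero (pow_ne_zero 2 hb) ha.ne_zero
  have hd : d ≠ 0 := by rintro rfl; simp_all
  rw [← factorization_le_iff_dvd hd hb]
  intro p
  have hp := (factorization_le_iff_dvd (pow_ne_zero 2 hd) hba).2 h p
  have hap := (squarefree_iff_factorization_le_one ha.ne_zero).1 ha p
  simp only [factorization_mul (pow_ne_zero 2 hb) ha.ne_zero, factorization_pow,
    Finsupp.add_apply, Finsupp.smul_apply, smul_eq_mul] at hp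
  omega

theorem filter_sq_dvd_divisors_sq_mul_squarefree {a b : ℕ} (ha : Squarefree a) (hb : b ≠ 0) :
    {d ∈ (b ^ 2 * a).divisors | d ^ 2 ∣ b ^ 2 * a} = b.divisors := by
  ext d
  simp only [mem_filter, mem_divisors]
  constructor
  · rintro ⟨-, h⟩
    exact ⟨dvd_of_sq_dvd_sq_mul_squarefree ha hb h, hb⟩
  · rintro ⟨h, -⟩
    have h2 : d ^ 2 ∣ b ^ 2 * a := (pow_dvd_pow_of_dvd h 2).mul_right a
    exact ⟨⟨(dvd_pow_self d two_ne_zero).trans h2, mul_ne_zero (pow_ne_zero 2 hb) ha.ne_zero⟩, h2⟩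

theorem sum_moebius_filter_sq_dvd {m : ℕ} (hm : m ≠ 0) :
    ∑ d ∈ m.divisors with d ^ 2 ∣ m, μ d = if Squarefree m then 1 else 0 := by
  obtain ⟨a, b, rfl, ha⟩ := sq_mul_squarefree m
  have hb : b ≠ 0 := by rintro rfl; simp at hm
  have hsq : Squarefree (b ^ 2 * a) ↔ b = 1 := by
    refine ⟨fun h => ?_, by rintro rfl; simpa using ha⟩
    exact Nat.isUnit_iff.1 (h b (by rw [← sq]; exact dvd_mul_right _ _))
  rw [filter_sq_dvd_divisors_sq_mul_squarefree ha hb, ← coe_mul_zeta_apply,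
    moebius_mul_coe_zeta, one_apply, if_congr hsq.symm rfl rfl]

theorem sum_filter_sq_dvd_sum_divisors_div_sq_comm {M : Type*} [AddCommMonoid M] (n : ℕ)
    (f : ℕ → ℕ → M) :
    ∑ d ∈ n.divisors with d ^ 2 ∣ n, ∑ t ∈ (n / d ^ 2).divisors, f d t =
      ∑ t ∈ n.divisors, ∑ d ∈ (n / t).divisors with d ^ 2 ∣ n / t, f d t := by
  refine sum_comm' fun d t => ?_
  simp only [mem_filter, mem_divisors]
  have quot_ne_zero {a : ℕ} (hn : n ≠ 0) (ha : a ∣ n) : n / a ≠ 0 :=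
    (Nat.div_ne_zero_iff_of_dvd ha).2 ⟨hn, ne_zero_of_dvd_ne_zero hn ha⟩
  constructor
  · rintro ⟨⟨⟨-, hn⟩, hd⟩, ht, -⟩
    have hdt : t * d ^ 2 ∣ n := mul_comm (d ^ 2) t ▸ (Nat.dvd_div_iff_mul_dvd hd).1 ht
    have htn : t ∣ n := (dvd_mul_right t _).trans hdt
    have hd' : d ^ 2 ∣ n / t := (Nat.dvd_div_iff_mul_dvd htn).2 hdt
    exact ⟨⟨⟨(dvd_pow_self d two_ne_zero).trans hd', quot_ne_zero hn htn⟩, hd'⟩, htn, hn⟩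
  · rintro ⟨⟨-, hd'⟩, htn, hn⟩
    have hdt : d ^ 2 * t ∣ n := mul_comm t (d ^ 2) ▸ (Nat.dvd_div_iff_mul_dvd htn).1 hd'
    have hd : d ^ 2 ∣ n := (dvd_mul_right _ t).trans hdt
    exact ⟨⟨⟨(dvd_pow_self d two_ne_zero).trans hd, hn⟩, hd⟩,
      (Nat.dvd_div_iff_mul_dvd hd).2 hdt, quot_ne_zero hn hd⟩

theorem sum_moebius_mul_sigma_div_sq (k n : ℕ) :
    ∑ d ∈ n.divisors with d ^ 2 ∣ n, μ d * (σ k (n / d ^ 2) : ℤ) =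
      ∑ d ∈ n.divisors with Squarefree d, ((n / d) ^ k : ℕ) := by
  simp_rw [sigma_apply, Nat.cast_sum, mul_sum, sum_filter_sq_dvd_sum_divisors_div_sq_comm,
    ← sum_mul]
  symm
  rw [sum_filter, ← sum_div_divisors]
  refine sum_congr rfl fun t ht => ?_
  have hnt : n / t ≠ 0 := (Nat.div_pos (divisor_le ht) (pos_of_mem_divisors ht)).ne'
  rw [sum_moebius_filter_sq_dvd hnt,
    Nat.div_div_self (dvd_of_mem_divisors ht) (ne_zero_of_mem_divisors ht)]
  split_ifs <;> simp

end Nat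

theorem ArithmeticFunction.IsMultiplicative.sum_divisors_filter_squarefree {R : Type*}
    [CommSemiring R] {f : ArithmeticFunction R} (hf : f.IsMultiplicative) {n : ℕ} (hn : n ≠ 0) :
    ∑ d ∈ n.divisors with Squarefree d, f d = ∏ p ∈ n.primeFactors, (1 + f p) := by
  rw [Nat.sum_divisors_filter_squarefree hn, Nat.factors_eq, prod_one_add]
  refine sum_congr rfl fun s hs => ?_
  rw [← hf.map_prod_of_subset_primeFactors n s (mem_powerset.1 hs), prod_val]
  rfl

theorem stmt_19 (n : ℕ) (hn : 0 < n) :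
    ∑ d ∈ n.divisors.filter (fun d => d ^ 2 ∣ n),
        (ArithmeticFunction.moebius d : ℝ) * (ArithmeticFunction.sigma 3 (n / d ^ 2) : ℝ) =
      (n : ℝ) ^ 3 * ∏ p ∈ n.primeFactors, (1 + 1 / (p : ℝ) ^ 3) := by
  let f : ArithmeticFunction ℝ := ⟨fun d => 1 / (d : ℝ) ^ 3, by simp⟩
  have hf : f.IsMultiplicative := ⟨by simp [f], fun _ => by simp [f, mul_pow, mul_comm]⟩
  have h := congrArg (Int.cast : ℤ → ℝ) (Nat.sum_moebius_mul_sigma_div_sq 3 n)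
  simp only [Int.cast_sum, Int.cast_mul, Int.cast_natCast, Nat.cast_sum] at h
  change _ = _ * ∏ p ∈ n.primeFactors, (1 + f p)
  rw [h, ← hf.sum_divisors_filter_squarefree hn.ne', mul_sum]
  refine sum_congr rfl fun d hd => ?_
  rw [Nat.cast_pow, Nat.cast_div_charZero (Nat.dvd_of_mem_divisors (mem_filter.1 hd).1),
    div_pow, div_eq_mul_one_div]
  rfl
end
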